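/- For w, ε > 0 let q_n = (ε/(w+2ε))^{|n|} √(w+2ε) for n ∈ ℤ, and let g_n = (ε/(w+2ε))^{n−1} √(w+ε) for n ≥ 1, extended to all of ℤ by g_n = g_{−(n−1)}. Then the energies E_A(ε,w) = (ε/2) Σ_{n∈ℤ} (q_{n+1} − q_n)² − (1/4) Σ_{n∈ℤ} q_n⁴ and E_B(ε,w) = (ε/2) Σ_{n∈ℤ} (g_{n+1} − g_n)² − (1/4) Σ_{n∈ℤ} g_n⁴ are given exactly by E_A(ε,w) = ε(w+ε)(w+2ε)/(w+3ε) − (w+2ε)²((w+2ε)⁴ + ε⁴)/(4((w+2ε)⁴ − ε⁴)) and E_B(ε,w) = ε(w+ε)²/(w+3ε) − (w+ε)²/(2(1 − ε⁴/(w+2ε)⁴)). -/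

import Mathlib

open scoped BigOperators

noncomputable section

/-- The onsite sequence `q_n = (ε/(w+2ε))^{|n|} √(w+2ε)`. -/
def qon (w ε : ℝ) (n : ℤ) : ℝ := (ε / (w + 2 * ε)) ^ n.natAbs * Real.sqrt (w + 2 * ε)

/-- The offsite sequence `g_n = (ε/(w+2ε))^{n−1} √(w+ε)` for `n ≥ 1`, extended to `ℤ` by the
symmetry `g_n = g_{−(n−1)}`; the exponent is `max(n−1, −n)`. -/
def goff (w ε : ℝ) (n : ℤ) : ℝ :=
  (ε / (w + 2 * ε)) ^ (max (n - 1) (-n)).toNat * Real.sqrt (w + ε)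

private lemma geom_aux {x : ℝ} (h0 : 0 ≤ x) (h1 : x < 1) (c : ℝ) :
    HasSum (fun n : ℕ => c * x ^ n) (c / (1 - x)) := by
  simpa [div_eq_mul_inv] using (hasSum_geometric_of_lt_one h0 h1).mul_left c

/-- Closed-form expressions for the DNLS energies of the onsite and offsite sequences. -/
theorem onsite_offsite_energies (w ε : ℝ) (hw : 0 < w) (hε : 0 < ε) :
    (ε / 2) * (∑' n : ℤ, (qon w ε (n + 1) - qon w ε n) ^ 2)
        - (1 / 4) * (∑' n : ℤ, (qon w ε n) ^ 4)
      = ε * (w + ε) * (w + 2 * ε) / (w + 3 * ε)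
        - (w + 2 * ε) ^ 2 * ((w + 2 * ε) ^ 4 + ε ^ 4)
          / (4 * ((w + 2 * ε) ^ 4 - ε ^ 4)) ∧
    (ε / 2) * (∑' n : ℤ, (goff w ε (n + 1) - goff w ε n) ^ 2)
        - (1 / 4) * (∑' n : ℤ, (goff w ε n) ^ 4)
      = ε * (w + ε) ^ 2 / (w + 3 * ε)
        - (w + ε) ^ 2 / (2 * (1 - ε ^ 4 / (w + 2 * ε) ^ 4)) := by
  have hd : (0:ℝ) < w + 2 * ε := by linarith
  set s : ℝ := Real.sqrt (w + 2 * ε) with hs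
  set t : ℝ := Real.sqrt (w + ε) with ht
  set r : ℝ := ε / (w + 2 * ε) with hr
  have hr0 : 0 ≤ r := by positivity
  have hr1 : r < 1 := by rw [hr, div_lt_one hd]; linarith
  have hr21 : r ^ 2 < 1 := by nlinarith
  have hr41 : r ^ 4 < 1 := by nlinarith
  have hs2 : s ^ 2 = w + 2 * ε := Real.sq_sqrt hd.le
  have ht2 : t ^ 2 = w + ε := Real.sq_sqrt (by linarith)
  -- sum A1 : ∑ (q_{n+1} - q_n)^2
  have hA1 : HasSum (fun n : ℤ => (qon w ε (n + 1) - qon w ε n) ^ 2)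
      (s ^ 2 * (1 - r) ^ 2 / (1 - r ^ 2) + s ^ 2 * (1 - r) ^ 2 / (1 - r ^ 2)) := by
    refine HasSum.of_nat_of_neg_add_one ?_ ?_
    · have h := geom_aux (x := r ^ 2) (by positivity) hr21 (s ^ 2 * (1 - r) ^ 2)
      convert h using 2 with n
      have e1 : ((n:ℤ) + 1).natAbs = n + 1 := by omega
      have e2 : ((n:ℤ)).natAbs = n := by omega
      simp only [qon, e1, e2, ← hr, ← hs]
      ring
    · have h := geom_aux (x := r ^ 2) (by positivity) hr21 (s ^ 2 * (1 - r) ^ 2)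
      convert h using 2 with n
      have e1 : (-((n:ℤ) + 1) + 1).natAbs = n := by omega
      have e2 : (-((n:ℤ) + 1)).natAbs = n + 1 := by omega
      simp only [qon, e1, e2, ← hr, ← hs]
      ring
  -- sum A2 : ∑ q_n^4
  have hA2 : HasSum (fun n : ℤ => (qon w ε n) ^ 4)
      ((s ^ 2) ^ 2 / (1 - r ^ 4) + (s ^ 2) ^ 2 * r ^ 4 / (1 - r ^ 4)) := by
    refine HasSum.of_nat_of_neg_add_one ?_ ?_
    · have h := geom_aux (x := r ^ 4) (by positivity) hr41 ((s ^ 2) ^ 2)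
      convert h using 2 with n
      have e2 : ((n:ℤ)).natAbs = n := by omega
      simp only [qon, e2, ← hr, ← hs]
      ring
    · have h := geom_aux (x := r ^ 4) (by positivity) hr41 ((s ^ 2) ^ 2 * r ^ 4)
      convert h using 2 with n
      have e2 : (-((n:ℤ) + 1)).natAbs = n + 1 := by omega
      simp only [qon, e2, ← hr, ← hs]
      ring
  -- sum B1 : ∑ (g_{n+1} - g_n)^2
  have hB1 : HasSum (fun n : ℤ => (goff w ε (n + 1) - goff w ε n) ^ 2)
      (t ^ 2 * (1 - r) ^ 2 / (1 - r ^ 2) + t ^ 2 * (1 - r) ^ 2 / (1 - r ^ 2)) := by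
    refine HasSum.of_nat_of_neg_add_one ?_ ?_
    · -- positive side: term at 0 vanishes, shift by one
      have h : HasSum (fun n : ℕ =>
          (goff w ε ((n:ℤ) + 1 + 1) - goff w ε ((n:ℤ) + 1)) ^ 2)
          (t ^ 2 * (1 - r) ^ 2 / (1 - r ^ 2)) := by
        have h := geom_aux (x := r ^ 2) (by positivity) hr21 (t ^ 2 * (1 - r) ^ 2)
        convert h using 2 with n
        have e1 : (max ((n:ℤ) + 1 + 1 - 1) (-((n:ℤ) + 1 + 1))).toNat = n + 1 := by omega
        have e2 : (max ((n:ℤ) + 1 - 1) (-((n:ℤ) + 1))).toNat = n := by omega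
        simp only [goff, e1, e2, ← hr, ← ht]
        ring
      have h0 : goff w ε 1 = goff w ε 0 := by norm_num [goff]
      have h2 := (hasSum_nat_add_iff
        (f := fun n : ℕ => (goff w ε ((n:ℤ) + 1) - goff w ε (n:ℤ)) ^ 2) 1).mp
        (by convert h using 2; rfl; simp only [Nat.cast_add, Nat.cast_one])
      simpa [h0] using h2
    · have h := geom_aux (x := r ^ 2) (by positivity) hr21 (t ^ 2 * (1 - r) ^ 2)
      convert h using 2 with n
      have e1 : (max (-((n:ℤ) + 1) + 1 - 1) (-(-((n:ℤ) + 1) + 1))).toNat = n := by omega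
      have e2 : (max (-((n:ℤ) + 1) - 1) (-(-((n:ℤ) + 1)))).toNat = n + 1 := by omega
      simp only [goff, e1, e2, ← hr, ← ht]
      ring
  -- sum B2 : ∑ g_n^4
  have hB2 : HasSum (fun n : ℤ => (goff w ε n) ^ 4)
      (((t ^ 2) ^ 2 / (1 - r ^ 4) + (t ^ 2) ^ 2) + (t ^ 2) ^ 2 * r ^ 4 / (1 - r ^ 4)) := by
    refine HasSum.of_nat_of_neg_add_one ?_ ?_
    · have h : HasSum (fun n : ℕ => (goff w ε ((n:ℤ) + 1)) ^ 4)
          ((t ^ 2) ^ 2 / (1 - r ^ 4)) := by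
        have h := geom_aux (x := r ^ 4) (by positivity) hr41 ((t ^ 2) ^ 2)
        convert h using 2 with n
        have e2 : (max ((n:ℤ) + 1 - 1) (-((n:ℤ) + 1))).toNat = n := by omega
        simp only [goff, e2, ← hr, ← ht]
        ring
      have h0 : (goff w ε 0) ^ 4 = (t ^ 2) ^ 2 := by
        norm_num [goff, ← ht]; ring
      have h2 := (hasSum_nat_add_iff (f := fun n : ℕ => (goff w ε (n:ℤ)) ^ 4) 1).mp
        (by convert h using 2; rfl; simp only [Nat.cast_add, Nat.cast_one])
      simpa [h0] using h2
    · have h := geom_aux (x := r ^ 4) (by positivity) hr41 ((t ^ 2) ^ 2 * r ^ 4)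
      convert h using 2 with n
      have e2 : (max (-((n:ℤ) + 1) - 1) (-(-((n:ℤ) + 1)))).toNat = n + 1 := by omega
      simp only [goff, e2, ← hr, ← ht]
      ring
  rw [hA1.tsum_eq, hA2.tsum_eq, hB1.tsum_eq, hB2.tsum_eq, hs2, ht2]
  -- closed forms of the geometric factors
  have hd' : w + 2 * ε ≠ 0 := hd.ne'
  have h1 : w + ε ≠ 0 := by positivity
  have h3 : w + 3 * ε ≠ 0 := by positivity
  have hlt : ε ^ 4 < (w + 2 * ε) ^ 4 := by
    have := pow_lt_pow_left₀ (show ε < w + 2 * ε by linarith) hε.le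
      (by norm_num : (4:ℕ) ≠ 0)
    linarith
  have hden : (w + 2 * ε) ^ 4 - ε ^ 4 ≠ 0 := by linarith
  have E1 : 1 - r = (w + ε) / (w + 2 * ε) := by rw [hr]; field_simp; ring
  have E2 : 1 - r ^ 2 = (w + ε) * (w + 3 * ε) / (w + 2 * ε) ^ 2 := by
    rw [hr]; field_simp; ring
  have E4 : 1 - r ^ 4 = ((w + 2 * ε) ^ 4 - ε ^ 4) / (w + 2 * ε) ^ 4 := by
    rw [hr]; field_simp
  have Er4 : r ^ 4 = ε ^ 4 / (w + 2 * ε) ^ 4 := by rw [hr, div_pow]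
  constructor
  · rw [E1, E2, E4, Er4]
    field_simp
    ring
  · rw [E1, E2, E4, Er4]
    rw [show (1:ℝ) - ε ^ 4 / (w + 2 * ε) ^ 4
        = ((w + 2 * ε) ^ 4 - ε ^ 4) / (w + 2 * ε) ^ 4 by field_simp]
    field_simp
    rw [div_add_one (show (w + ε * 2) ^ 4 - ε ^ 4 ≠ 0 by rwa [mul_comm ε 2]), ← add_div]
    ring
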